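/- arXiv:1804.05460 — 3 statements merged into one kernel-verified Lean document; each statement's English description precedes it below -/
import Mathlib

section
/- With Z as above and a permutation σ of {1,...,n}, setting t_{ij} = 1 if (i,j) is an inversion of σ (i.e. σ^{-1}(i) > σ^{-1}(j) appropriately ordered) and t_{ij} = 0 otherwise, the resulting point of Z equals v_σ = ∑_{j=2}^n (∑_{i<j} c_{σ_i σ_j}) e_{σ_j}. In particular, for each permutation σ, the point v_σ = c_{σ₁σ₂} e_{σ₂} + c_{{σ₁,σ₂}|σ₃} e_{σ₃} + ⋯ + c_{{σ₁,...,σ_{n-1}}|σ_n} e_{σ_n} lies in Z. -/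
/-! With `t i j = 1` exactly at the inversions of `σ`, each segment `c i j • [e_i, e_j]`
contributes its full weight to whichever of `i`, `j` comes later in `σ`. Reindexing by `σ`,
the weight collected at `e_{σ l}` is `∑_{k < l} c (σ k) (σ l)`, which is `v_σ`. -/

open Finset

section PairSums

variable {ι β M : Type*} [Fintype ι] [LinearOrder ι] [AddCommMonoid M]

theorem sum_sum_ite_lt_reorient [LinearOrder β] {τ : ι → β} (hτ : Function.Injective τ)
    (g : ι → ι → M) :
    ∑ i, ∑ j, (if i < j then (if τ j < τ i then g j i else g i j) else 0)
      = ∑ i, ∑ j, if τ i < τ j then g i j else 0 := by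
  have lhs : ∀ i j, (if i < j then (if τ j < τ i then g j i else g i j) else 0)
      = (if i < j ∧ τ i < τ j then g i j else 0) + (if i < j ∧ τ j < τ i then g j i else 0) := by
    intro i j
    by_cases hij : i < j
    · rcases lt_or_gt_of_ne (hτ.ne hij.ne) with h | h <;> simp [hij, h, h.not_gt]
    · simp [hij]
  have rhs : ∀ i j, (if τ i < τ j then g i j else 0)
      = (if i < j ∧ τ i < τ j then g i j else 0) + (if j < i ∧ τ i < τ j then g i j else 0) := by
    intro i j
    by_cases h : τ i < τ j
    · rcases lt_or_gt_of_ne (ne_of_apply_ne τ h.ne) with hij | hij <;> simp [hij, h, hij.not_gt]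
    · simp [h]
  simp only [lhs, rhs, sum_add_distrib]
  rw [sum_comm (f := fun i j => if j < i ∧ τ i < τ j then g i j else 0)]

theorem Equiv.Perm.sum_sum_ite_symm_lt (σ : Equiv.Perm ι) (g : ι → ι → M) :
    ∑ i, ∑ j, (if σ.symm i < σ.symm j then g i j else 0)
      = ∑ j, ∑ i ∈ univ.filter (· < j), g (σ i) (σ j) := by
  have reindex : ∑ i, ∑ j, (if σ.symm i < σ.symm j then g i j else 0)
      = ∑ k, ∑ l, if k < l then g (σ k) (σ l) else 0 := by
    rw [← Equiv.sum_comp σ]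
    refine sum_congr rfl fun k _ => ?_
    rw [← Equiv.sum_comp σ]
    simp
  rw [reindex, sum_comm]
  simp only [sum_filter]

end PairSums

section Zonotope

variable {ι : Type*} [Fintype ι] [LinearOrder ι]

/-- `Z` is the set of these points for `t` with values in `[0, 1]`. -/
def zonotopePoint (c t : ι → ι → ℝ) : ι → ℝ :=
  ∑ i, ∑ j, if i < j then c i j • (t i j • (Pi.single i 1 : ι → ℝ)
    + (1 - t i j) • (Pi.single j 1 : ι → ℝ)) else 0

theorem zonotopePoint_inversions {c : ι → ι → ℝ} (hsym : ∀ i j, c i j = c j i)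
    {β : Type*} [LinearOrder β] {τ : ι → β} (hτ : Function.Injective τ) :
    zonotopePoint c (fun i j => if τ j < τ i then 1 else 0)
      = ∑ i, ∑ j, if τ i < τ j then c i j • (Pi.single j 1 : ι → ℝ) else 0 := by
  rw [← sum_sum_ite_lt_reorient hτ]
  refine sum_congr rfl fun i _ => sum_congr rfl fun j _ => ?_
  by_cases hinv : τ j < τ i <;> simp [hinv, hsym i j]

end Zonotope

theorem stmt_5_general (n : ℕ) (c : Fin n → Fin n → ℝ)
    (hsym : ∀ i j, c i j = c j i)
    (σ : Equiv.Perm (Fin n)) :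
    (∑ i : Fin n, ∑ j : Fin n,
        if i < j then c i j •
          ((if σ.symm j < σ.symm i then (1 : ℝ) else 0) • (Pi.single i 1 : Fin n → ℝ)
            + (1 - if σ.symm j < σ.symm i then (1 : ℝ) else 0) •
                (Pi.single j 1 : Fin n → ℝ))
        else 0)
      = (∑ j : Fin n, (∑ i ∈ Finset.univ.filter (· < j), c (σ i) (σ j)) •
          (Pi.single (σ j) 1 : Fin n → ℝ)) ∧
    (∑ j : Fin n, (∑ i ∈ Finset.univ.filter (· < j), c (σ i) (σ j)) •
          (Pi.single (σ j) 1 : Fin n → ℝ)) ∈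
      {x : Fin n → ℝ | ∃ t : Fin n → Fin n → ℝ,
        (∀ i j, 0 ≤ t i j ∧ t i j ≤ 1) ∧
        x = ∑ i : Fin n, ∑ j : Fin n,
          if i < j then c i j • (t i j • (Pi.single i 1 : Fin n → ℝ)
            + (1 - t i j) • (Pi.single j 1 : Fin n → ℝ)) else 0} := by
  have vertex : zonotopePoint c (fun i j => if σ.symm j < σ.symm i then 1 else 0)
      = ∑ j, (∑ i ∈ univ.filter (· < j), c (σ i) (σ j)) • (Pi.single (σ j) 1 : Fin n → ℝ) := by
    rw [zonotopePoint_inversions hsym σ.symm.injective, σ.sum_sum_ite_symm_lt]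
    simp only [sum_smul]
  refine ⟨vertex, _, fun i j => ?_, vertex.symm⟩
  split_ifs <;> norm_num

theorem stmt_5 (n : ℕ) (c : Fin n → Fin n → ℝ)
    (hsym : ∀ i j, c i j = c j i) (hnn : ∀ i j, 0 ≤ c i j)
    (σ : Equiv.Perm (Fin n)) :
    (∑ i : Fin n, ∑ j : Fin n,
        if i < j then c i j •
          ((if σ.symm j < σ.symm i then (1 : ℝ) else 0) • (Pi.single i 1 : Fin n → ℝ)
            + (1 - if σ.symm j < σ.symm i then (1 : ℝ) else 0) •
                (Pi.single j 1 : Fin n → ℝ))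
        else 0)
      = (∑ j : Fin n, (∑ i ∈ Finset.univ.filter (· < j), c (σ i) (σ j)) •
          (Pi.single (σ j) 1 : Fin n → ℝ)) ∧
    (∑ j : Fin n, (∑ i ∈ Finset.univ.filter (· < j), c (σ i) (σ j)) •
          (Pi.single (σ j) 1 : Fin n → ℝ)) ∈
      {x : Fin n → ℝ | ∃ t : Fin n → Fin n → ℝ,
        (∀ i j, 0 ≤ t i j ∧ t i j ≤ 1) ∧
        x = ∑ i : Fin n, ∑ j : Fin n,
          if i < j then c i j • (t i j • (Pi.single i 1 : Fin n → ℝ)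
            + (1 - t i j) • (Pi.single j 1 : Fin n → ℝ)) else 0} :=
  stmt_5_general n c hsym σ
end

section
/- For each permutation σ of {1,...,n}, the point v_σ = ∑_{j=2}^n (∑_{i<j} c_{σ_i σ_j}) e_{σ_j} satisfies the system x_{σ₁} = 0 and ∑_{a=1}^k x_{σ_a} = c_{{σ₁,...,σ_k}} for every k = 1,...,n, where c_J = ∑_{{i,j}⊆J} c_{ij}. Moreover v_σ satisfies x_J ≥ c_J for all subsets J ⊆ {1,...,n}. -/
/-!
The `j`-th coordinate of `v_σ` is the weight `c i j` summed over the `i` that `σ` places before `j`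
(`rankWeight σ⁻¹ c j`). Summing it over `J` counts each pair inside `J` once, at its later element,
plus the pairs whose earlier element lies outside `J`: these are nonnegative, and absent when `J`
is an initial segment of `σ`. For symmetric `c`, the pair sum over `J` does not depend on which
linear order orients the pairs, since twice it is the off-diagonal sum.
-/

open Finset Function

section PairSums

variable {α β M : Type*} [DecidableEq α] [LinearOrder β] [AddCommMonoid M]

lemma sum_sum_ite_lt_add_self {g : α → β} (hg : Injective g) {f : α → α → M}
    (hf : ∀ a b, f a b = f b a) (s : Finset α) :
    (∑ a ∈ s, ∑ b ∈ s, if g a < g b then f a b else 0) +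
        ∑ a ∈ s, ∑ b ∈ s, (if g a < g b then f a b else 0) =
      ∑ a ∈ s, ∑ b ∈ s, if a ≠ b then f a b else 0 := by
  nth_rewrite 2 [sum_comm]
  rw [← sum_add_distrib]
  refine sum_congr rfl fun a _ => ?_
  rw [← sum_add_distrib]
  refine sum_congr rfl fun b _ => ?_
  rcases lt_trichotomy (g a) (g b) with h | h | h
  · simp [h, h.not_gt, hg.ne_iff.mp h.ne]
  · simp [hg h]
  · simp [h, h.not_gt, hg.ne_iff.mp h.ne', hf a b]

lemma sum_sum_ite_lt_comp_eq [IsAddTorsionFree M] {γ : Type*} [LinearOrder γ] {g : α → β}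
    {h : α → γ} (hg : Injective g) (hh : Injective h) {f : α → α → M}
    (hf : ∀ a b, f a b = f b a) (s : Finset α) :
    (∑ a ∈ s, ∑ b ∈ s, if g a < g b then f a b else 0) =
      ∑ a ∈ s, ∑ b ∈ s, if h a < h b then f a b else 0 := by
  apply nsmul_right_injective two_ne_zero
  simp only [two_nsmul, sum_sum_ite_lt_add_self hg hf, sum_sum_ite_lt_add_self hh hf]

end PairSums

section RankWeight

variable {α β M : Type*} [Fintype α] [LinearOrder β] [AddCommMonoid M]

def rankWeight (e : α → β) (c : α → α → M) (j : α) : M :=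
  ∑ i, if e i < e j then c i j else 0

lemma sum_rankWeight_of_lowerSet (e : α → β) (c : α → α → M) {J : Finset α}
    (hJ : ∀ i j, j ∈ J → e i < e j → i ∈ J) :
    ∑ j ∈ J, rankWeight e c j = ∑ i ∈ J, ∑ j ∈ J, if e i < e j then c i j else 0 := by
  rw [sum_comm]
  refine sum_congr rfl fun j hj => (sum_subset (subset_univ J) fun i _ hi => ?_).symm
  rw [if_neg fun hij => hi (hJ i j hj hij)]

variable [PartialOrder M] [IsOrderedAddMonoid M]

lemma sum_sum_ite_lt_le_sum_rankWeight (e : α → β) {c : α → α → M} (hc : ∀ i j, 0 ≤ c i j)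
    (J : Finset α) :
    (∑ i ∈ J, ∑ j ∈ J, if e i < e j then c i j else 0) ≤ ∑ j ∈ J, rankWeight e c j := by
  rw [sum_comm]
  refine sum_le_sum fun j _ => sum_le_sum_of_subset_of_nonneg (subset_univ J) fun i _ _ => ?_
  split_ifs
  exacts [hc i j, le_rfl]

end RankWeight

theorem stmt_6 (n : ℕ) (hn : 0 < n) (c : Fin n → Fin n → ℝ)
    (hsym : ∀ i j, c i j = c j i) (hnn : ∀ i j, 0 ≤ c i j)
    (σ : Equiv.Perm (Fin n)) (v : Fin n → ℝ)
    (hv : ∀ k, v k = ∑ i ∈ Finset.univ.filter (· < σ.symm k), c (σ i) k) :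
    v (σ ⟨0, hn⟩) = 0 ∧
    (∀ k : Fin n, ∑ a ∈ Finset.univ.filter (· ≤ k), v (σ a)
        = ∑ i ∈ (Finset.univ.filter (· ≤ k)).image σ,
            ∑ j ∈ (Finset.univ.filter (· ≤ k)).image σ,
              if i < j then c i j else 0) ∧
    ∀ J : Finset (Fin n),
      (∑ i ∈ J, ∑ j ∈ J, if i < j then c i j else 0) ≤ ∑ j ∈ J, v j := by
  have hv' : v = rankWeight σ.symm c := funext fun k => by
    rw [hv, sum_filter, rankWeight,
      ← Equiv.sum_comp σ fun i => if σ.symm i < σ.symm k then c i k else 0]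
    simp only [Equiv.symm_apply_apply]
  have hpairs (J : Finset (Fin n)) :
      (∑ i ∈ J, ∑ j ∈ J, if i < j then c i j else 0) =
        ∑ i ∈ J, ∑ j ∈ J, if σ.symm i < σ.symm j then c i j else 0 :=
    sum_sum_ite_lt_comp_eq injective_id σ.symm.injective hsym J
  refine ⟨?_, fun k => ?_, fun J => ?_⟩
  · rw [hv, Equiv.symm_apply_apply]
    simp [Fin.lt_def]
  · rw [← sum_image fun a _ b _ h => σ.injective h, hv', sum_rankWeight_of_lowerSet, hpairs]
    simp only [mem_image, mem_filter, mem_univ, true_and]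
    rintro i _ ⟨a, hak, rfl⟩ hi
    exact ⟨σ.symm i, (hi.trans_eq (σ.symm_apply_apply a)).le.trans hak, σ.apply_symm_apply i⟩
  · rw [hv', hpairs]
    exact sum_sum_ite_lt_le_sum_rankWeight _ hnn J
end

section
/- For real (or field) variables y₁,...,y_m with all cyclic consecutive differences nonzero, the cyclic sum vanishes: ∑_{k=0}^{m-1} 1/∏_{i=1}^{m-1}(y_{σ^k(i)} - y_{σ^k(i+1)}) = 0, where σ is the cyclic shift i ↦ i+1 mod m. Equivalently, 1/((y₁-y₂)⋯(y_{m-1}-y_m)) + 1/((y₂-y₃)⋯(y_m-y₁)) + ⋯ + 1/((y_m-y₁)⋯(y_{m-2}-y_{m-1})) = 0. -/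
/-!
Write `d j = y j - y (j + 1)` for `j : ZMod m`. The `k`-th product runs over all the `d`'s except
`d (k - 1)`, so its inverse is `d (k - 1) / ∏ j, d j`, and the sum is `(∑ j, d j) / ∏ j, d j`.
The numerator telescopes to `0`.
-/

open Finset

@[to_additive]
theorem ZMod.prod_range_add_natCast {M : Type*} [CommMonoid M] (m : ℕ) [NeZero m]
    (f : ZMod m → M) (a : ZMod m) :
    ∏ i ∈ range m, f (a + i) = ∏ j, f j := by
  apply prod_nbij' (fun i : ℕ => a + i) (fun j => (j - a).val)
  · intro _ _; exact mem_univ _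
  · intro j _; exact mem_range.mpr (ZMod.val_lt _)
  · intro i hi; simp [ZMod.val_cast_of_lt (mem_range.mp hi)]
  · intro j _; simp
  · intro _ _; rfl

theorem Fintype.sum_sub_comp_add_right_eq_zero {G M : Type*} [AddGroup G] [Fintype G]
    [AddCommGroup M] (f : G → M) (a : G) :
    ∑ j, (f j - f (j + a)) = 0 := by
  rw [sum_sub_distrib, sub_eq_zero]
  exact (Equiv.sum_comp (Equiv.addRight a) f).symm

theorem ZMod.sum_range_inv_prod_range_eq_zero {K : Type*} [Field K] (n : ℕ)
    (d : ZMod (n + 1) → K) (hd : ∀ j, d j ≠ 0) (hsum : ∑ j, d j = 0) :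
    ∑ k ∈ range (n + 1), (∏ i ∈ range n, d (k + i))⁻¹ = 0 := by
  have hterm (k : ℕ) : (∏ i ∈ range n, d (k + i))⁻¹ = d (n + k) / ∏ j, d j := by
    rw [← ZMod.prod_range_add_natCast (n + 1) d k, prod_range_succ, add_comm (n : ZMod (n + 1)) k,
      div_mul_cancel_right₀ (hd _)]
  simp only [hterm, ← sum_div, ZMod.sum_range_add_natCast, hsum, zero_div]

theorem stmt_11_general (m : ℕ) (y : ZMod m → ℝ)
    (hy : ∀ j : ZMod m, y j ≠ y (j + 1)) :
    ∑ k ∈ Finset.range m,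
      (∏ i ∈ Finset.range (m - 1),
        (y ((k + i : ℕ) : ZMod m) - y ((k + i + 1 : ℕ) : ZMod m)))⁻¹ = 0 := by
  rcases m with _ | n
  · simp
  have hcyclic := ZMod.sum_range_inv_prod_range_eq_zero n (fun j => y j - y (j + 1))
    (fun j => sub_ne_zero.mpr (hy j)) (Fintype.sum_sub_comp_add_right_eq_zero y 1)
  simpa only [Nat.add_sub_cancel, Nat.cast_add, Nat.cast_one] using hcyclic

theorem stmt_11 (m : ℕ) (hm : 2 ≤ m) (y : ZMod m → ℝ)
    (hy : ∀ j : ZMod m, y j ≠ y (j + 1)) :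
    ∑ k ∈ Finset.range m,
      (∏ i ∈ Finset.range (m - 1),
        (y ((k + i : ℕ) : ZMod m) - y ((k + i + 1 : ℕ) : ZMod m)))⁻¹ = 0 :=
  stmt_11_general m y hy
end
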